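/- arXiv:1010.4760 — 3 statements merged into one kernel-verified Lean document; each statement's English description precedes it below -/
import Mathlib

section
/- In any deterministic labelled transition system, if r ≁ s and (r,s) →^u (r',s'), then eqlevel(r,s) = |u| + eqlevel(r',s') if and only if u is an offending prefix for (r,s), i.e. u is a prefix of some word in Off(r,s). -/
namespace FOGPaper

variable {S A : Type*}

/-- Extension of the single-step transition relations to words. -/
def Steps (tr : A → S → S → Prop) : List A → S → S → Prop
  | [], s, t => t = s
  | a :: w, s, t => ∃ s', tr a s s' ∧ Steps tr w s' t

/-- The trace set of a state: the finite words it enables. -/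
def traces (tr : A → S → S → Prop) (s : S) : Set (List A) :=
  {w | ∃ t, Steps tr w s t}

/-- The traces of length at most `k`. -/
def tracesLe (tr : A → S → S → Prop) (k : ℕ) (s : S) : Set (List A) :=
  {w ∈ traces tr s | w.length ≤ k}

/-- `r ∼ₖ s` : `r` and `s` enable the same words of length at most `k`. -/
def SimK (tr : A → S → S → Prop) (k : ℕ) (r s : S) : Prop :=
  tracesLe tr k r = tracesLe tr k s

/-- `r ∼ s` : trace equivalence. -/
def Sim (tr : A → S → S → Prop) (r s : S) : Prop :=
  traces tr r = traces tr s

/-- The equivalence level in ℕ ∪ {ω}: the supremum of the `k` with `r ∼ₖ s`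
(equal to `k` iff `r ∼ₖ s` and not `r ∼ₖ₊₁ s`, and to `ω = ⊤` iff `r ∼ s`). -/
noncomputable def eqLevel (tr : A → S → S → Prop) (r s : S) : ℕ∞ :=
  ⨆ k ∈ {k : ℕ | SimK tr k r s}, (k : ℕ∞)

/-- The offending words for `(r,s)` : the shortest words lying in exactly one of
`traces r`, `traces s`. -/
def offWords (tr : A → S → S → Prop) (r s : S) : Set (List A) :=
  {w | w ∈ (traces tr r \ traces tr s) ∪ (traces tr s \ traces tr r) ∧
       ∀ v ∈ (traces tr r \ traces tr s) ∪ (traces tr s \ traces tr r),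
         w.length ≤ v.length}

/-- A labelled transition system is deterministic if each `→ᵃ` is a partial function. -/
def IsDet (tr : A → S → S → Prop) : Prop :=
  ∀ a r s₁ s₂, tr a r s₁ → tr a r s₂ → s₁ = s₂

/-- The infinite traces (ω-words enabled in a state). -/
def omTraces (tr : A → S → S → Prop) (s : S) : Set (ℕ → A) :=
  {α | ∃ f : ℕ → S, f 0 = s ∧ ∀ i, tr (α i) (f i) (f (i + 1))}

/-- Concatenation of a finite word with an infinite word. -/
def wApp (u : List A) (α : ℕ → A) : ℕ → A := fun i =>
  if h : i < u.length then u[i]'h else α (i - u.length)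


-- auxiliary

def symdiff (tr : A → S → S → Prop) (r s : S) : Set (List A) :=
  (traces tr r \ traces tr s) ∪ (traces tr s \ traces tr r)

variable {tr : A → S → S → Prop} {r s : S}

lemma steps_append {u v : List A} {r t : S} :
    Steps tr (u ++ v) r t ↔ ∃ m, Steps tr u r m ∧ Steps tr v m t := by
  induction u generalizing r with
  | nil =>
    simp only [List.nil_append, Steps]
    constructor
    · intro h; exact ⟨r, rfl, h⟩
    · rintro ⟨m, rfl, h⟩; exact h
  | cons a u ih =>
    simp only [List.cons_append, Steps]
    constructor
    · rintro ⟨s'', h1, h2⟩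
      obtain ⟨m, hm1, hm2⟩ := ih.mp h2
      exact ⟨m, ⟨s'', h1, hm1⟩, hm2⟩
    · rintro ⟨m, ⟨s'', h1, hm1⟩, hm2⟩
      exact ⟨s'', h1, ih.mpr ⟨m, hm1, hm2⟩⟩

lemma steps_det (hdet : IsDet tr) {u : List A} {r t₁ t₂ : S}
    (h1 : Steps tr u r t₁) (h2 : Steps tr u r t₂) : t₁ = t₂ := by
  induction u generalizing r with
  | nil => simp only [Steps] at h1 h2; rw [h1, h2]
  | cons a u ih =>
    obtain ⟨s1, ha1, hs1⟩ := h1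
    obtain ⟨s2, ha2, hs2⟩ := h2
    cases hdet a r s1 s2 ha1 ha2
    exact ih hs1 hs2

lemma mem_traces_quot (hdet : IsDet tr) {u : List A} {r r' : S}
    (hr : Steps tr u r r') {v : List A} :
    (u ++ v) ∈ traces tr r ↔ v ∈ traces tr r' := by
  constructor
  · rintro ⟨t, ht⟩
    obtain ⟨m, hm1, hm2⟩ := steps_append.mp ht
    obtain rfl := steps_det hdet hm1 hr
    exact ⟨t, hm2⟩
  · rintro ⟨t, ht⟩
    exact ⟨t, steps_append.mpr ⟨r', hr, ht⟩⟩

lemma mem_symdiff_quot (hdet : IsDet tr) {u : List A} {r s r' s' : S}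
    (hr : Steps tr u r r') (hs : Steps tr u s s') {v : List A} :
    (u ++ v) ∈ symdiff tr r s ↔ v ∈ symdiff tr r' s' := by
  simp only [symdiff, Set.mem_union, Set.mem_diff,
    mem_traces_quot hdet hr, mem_traces_quot hdet hs]

lemma sim_iff_symdiff_empty : Sim tr r s ↔ symdiff tr r s = ∅ := by
  constructor
  · intro h
    have h' : traces tr r = traces tr s := h
    simp [symdiff, h']
  · intro h
    have h' := Set.eq_empty_iff_forall_notMem.mp h
    ext w
    constructor <;> intro hw
    · by_contra hc
      exact h' w (Set.mem_union_left _ ⟨hw, hc⟩)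
    · by_contra hc
      exact h' w (Set.mem_union_right _ ⟨hw, hc⟩)

lemma nil_mem_traces (s : S) : ([] : List A) ∈ traces tr s := ⟨s, rfl⟩

lemma simK_iff (k : ℕ) : SimK tr k r s ↔ ∀ w ∈ symdiff tr r s, k < w.length := by
  constructor
  · intro h w hw
    have h' : tracesLe tr k r = tracesLe tr k s := h
    by_contra hc
    push_neg at hc
    rcases hw with ⟨hw1, hw2⟩ | ⟨hw1, hw2⟩
    · have hm : w ∈ tracesLe tr k r := ⟨hw1, hc⟩
      rw [h'] at hm
      exact hw2 hm.1
    · have hm : w ∈ tracesLe tr k s := ⟨hw1, hc⟩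
      rw [← h'] at hm
      exact hw2 hm.1
  · intro h
    show tracesLe tr k r = tracesLe tr k s
    ext w
    constructor <;> rintro ⟨hw1, hw2⟩
    · refine ⟨?_, hw2⟩
      by_contra hc
      exact absurd hw2 (not_le.mpr (h w (Set.mem_union_left _ ⟨hw1, hc⟩)))
    · refine ⟨?_, hw2⟩
      by_contra hc
      exact absurd hw2 (not_le.mpr (h w (Set.mem_union_right _ ⟨hw1, hc⟩)))

lemma iSup_lt_eq (n : ℕ) :
    (⨆ k ∈ {k : ℕ | k < n + 1}, (k : ℕ∞)) = (n : ℕ∞) := by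
  apply le_antisymm
  · exact iSup₂_le fun k hk => by exact_mod_cast Nat.lt_succ_iff.mp hk
  · exact le_iSup₂ (f := fun (k : ℕ) (_ : k ∈ {k : ℕ | k < n + 1}) => (k : ℕ∞)) n
      (Nat.lt_succ_self n)

lemma eqLevel_of_minlen (hne : ¬ Sim tr r s) :
    ∃ ℓ : ℕ, 1 ≤ ℓ ∧ (∃ w ∈ symdiff tr r s, w.length = ℓ) ∧
      (∀ w ∈ symdiff tr r s, ℓ ≤ w.length) ∧
      eqLevel tr r s = ((ℓ - 1 : ℕ) : ℕ∞) := by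
  have hD : (symdiff tr r s).Nonempty := by
    rw [Set.nonempty_iff_ne_empty]
    intro h
    exact hne (sim_iff_symdiff_empty.mpr h)
  obtain ⟨w₀, hw₀⟩ := hD
  have hLne : {n | ∃ w ∈ symdiff tr r s, w.length = n}.Nonempty :=
    ⟨w₀.length, w₀, hw₀, rfl⟩
  obtain ⟨w₁, hw₁, hw₁len⟩ := Nat.sInf_mem hLne
  set ℓ := sInf {n | ∃ w ∈ symdiff tr r s, w.length = n} with hℓ
  have hmin : ∀ w ∈ symdiff tr r s, ℓ ≤ w.length := fun w hw =>
    Nat.sInf_le ⟨w, hw, rfl⟩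
  have hpos : 1 ≤ ℓ := by
    rcases Nat.eq_zero_or_pos ℓ with h0 | h1
    · exfalso
      have hz : w₁.length = 0 := by omega
      have : w₁ = [] := List.length_eq_zero_iff.mp hz
      subst this
      rcases hw₁ with ⟨_, h⟩ | ⟨_, h⟩ <;> exact h (nil_mem_traces _)
    · exact h1
  refine ⟨ℓ, hpos, ⟨w₁, hw₁, hw₁len⟩, hmin, ?_⟩
  have hset : {k : ℕ | SimK tr k r s} = {k : ℕ | k < (ℓ - 1) + 1} := by
    ext k
    simp only [Set.mem_setOf_eq, simK_iff]
    constructor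
    · intro h
      have := h w₁ hw₁
      omega
    · intro h w hw
      have := hmin w hw
      omega
  rw [eqLevel, hset, iSup_lt_eq]

lemma eqLevel_top (hsim : Sim tr r s) : eqLevel tr r s = ⊤ := by
  have hset : {k : ℕ | SimK tr k r s} = Set.univ := by
    ext k
    simp only [Set.mem_setOf_eq, Set.mem_univ, iff_true]
    show tracesLe tr k r = tracesLe tr k s
    unfold tracesLe
    rw [show traces tr r = traces tr s from hsim]
  rw [eqLevel, hset, iSup_univ, iSup_eq_top]
  intro b hb
  obtain ⟨m, rfl⟩ := WithTop.ne_top_iff_exists.mp hb.ne |>.imp fun m h => h.symm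
  exact ⟨m + 1, WithTop.coe_lt_coe.mpr (lt_add_one m)⟩

lemma mem_offWords_iff {ℓ : ℕ} (hmem : ∃ w ∈ symdiff tr r s, w.length = ℓ)
    (hmin : ∀ w ∈ symdiff tr r s, ℓ ≤ w.length) {w : List A} :
    w ∈ offWords tr r s ↔ w ∈ symdiff tr r s ∧ w.length = ℓ := by
  constructor
  · rintro ⟨hw, hall⟩
    obtain ⟨w₁, hw₁, hw₁len⟩ := hmem
    exact ⟨hw, le_antisymm (hw₁len ▸ hall w₁ hw₁) (hmin w hw)⟩
  · rintro ⟨hw, hlen⟩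
    exact ⟨hw, fun v hv => hlen ▸ hmin v hv⟩

/-- in a deterministic LTS, for `r ≁ s` and `(r,s) →ᵘ (r',s')`, the
eq-level drops exactly by `|u|` iff `u` is an offending prefix for `(r,s)`. -/
theorem eqLevel_drop_iff_offending_prefix {S A : Type*} (tr : A → S → S → Prop)
    (hdet : IsDet tr) (u : List A) (r s r' s' : S)
    (hns : ¬ Sim tr r s)
    (hr : Steps tr u r r') (hs : Steps tr u s s') :
    eqLevel tr r s = (u.length : ℕ∞) + eqLevel tr r' s' ↔
      ∃ w ∈ offWords tr r s, u <+: w := by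
  classical
  obtain ⟨ℓ, hℓ1, hℓmem, hℓmin, heq1⟩ := eqLevel_of_minlen hns
  by_cases hsim' : Sim tr r' s'
  · constructor
    · intro h
      rw [heq1, eqLevel_top hsim', add_top] at h
      exact absurd h (ENat.coe_ne_top _)
    · rintro ⟨w, hw, ⟨v, rfl⟩⟩
      have hwD : (u ++ v) ∈ symdiff tr r s := ((mem_offWords_iff hℓmem hℓmin).mp hw).1
      have : v ∈ symdiff tr r' s' := (mem_symdiff_quot hdet hr hs).mp hwD
      rw [sim_iff_symdiff_empty.mp hsim'] at this
      exact absurd this (Set.notMem_empty v)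
  · obtain ⟨ℓ', hℓ'1, hℓ'mem, hℓ'min, heq2⟩ := eqLevel_of_minlen hsim'
    obtain ⟨v₁, hv₁, hv₁len⟩ := hℓ'mem
    have huv₁ : (u ++ v₁) ∈ symdiff tr r s := (mem_symdiff_quot hdet hr hs).mpr hv₁
    have hle : ℓ ≤ u.length + ℓ' := by
      have h2 := hℓmin _ huv₁
      rw [List.length_append, hv₁len] at h2
      omega
    rw [heq1, heq2]
    have hcast : (u.length : ℕ∞) + ((ℓ' - 1 : ℕ) : ℕ∞) = ((u.length + (ℓ' - 1) : ℕ) : ℕ∞) := by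
      exact_mod_cast (Nat.cast_add _ _).symm
    rw [hcast]
    rw [Nat.cast_inj]
    constructor
    · intro h
      have hℓeq : ℓ = u.length + ℓ' := by omega
      refine ⟨u ++ v₁, (mem_offWords_iff hℓmem hℓmin).mpr ⟨huv₁, ?_⟩, ⟨v₁, rfl⟩⟩
      simp [hv₁len, hℓeq]
    · rintro ⟨w, hw, ⟨v, rfl⟩⟩
      obtain ⟨hwD, hwlen⟩ := (mem_offWords_iff hℓmem hℓmin).mp hw
      have hvD : v ∈ symdiff tr r' s' := (mem_symdiff_quot hdet hr hs).mp hwD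
      have := hℓ'min v hvD
      simp at hwlen
      omega

end FOGPaper
end

section
/- For any first-order grammar G, let F = F(x₁) be a regular term with F ≠ x₁, let W be a regular term satisfying W = F(W) (i.e., W equals the result of substituting W for x₁ in F), and let T be a ground regular term. If T ∼_k F(T) in L_G then T ∼_k W; hence T ∼ F(T) implies T ∼ W. -/
namespace FOGPaper

variable {S A : Type*}

/-- Possibly-infinite terms over nonterminals `N` (and variables `x₁, x₂, …`),
represented as partial labelling functions on positions (`Sum.inr i` is the
variable `xᵢ`). -/
abbrev Tm (N : Type*) := List ℕ → Option (N ⊕ ℕ)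

/-- Arity of a label: nonterminals have their arity, variables have arity 0. -/
def arityOf {N : Type*} (arity : N → ℕ) : N ⊕ ℕ → ℕ
  | Sum.inl X => arity X
  | Sum.inr _ => 0

/-- Well-formed term: the domain is nonempty (contains the root) and matches the
arities of the labels (which makes it prefix-closed). -/
def TmWF {N : Type*} (arity : N → ℕ) (E : Tm N) : Prop :=
  (E []).isSome ∧
    ∀ γ i, (E (γ ++ [i])).isSome ↔ ∃ v, E γ = some v ∧ 1 ≤ i ∧ i ≤ arityOf arity v

/-- The subterm (occurrence) of `E` at position `γ`. -/
def subAt {N : Type*} (E : Tm N) (γ : List ℕ) : Tm N := fun δ => E (γ ++ δ)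

/-- A term is regular if it has only finitely many subterms. -/
def TmRegular {N : Type*} (E : Tm N) : Prop := (Set.range (subAt E)).Finite

/-- A term is finite if its domain is finite. -/
def TmFinite {N : Type*} (E : Tm N) : Prop := {γ | (E γ).isSome}.Finite

/-- A term is ground if no variable occurs in it. -/
def TmGround {N : Type*} (E : Tm N) : Prop := ∀ γ i, E γ ≠ some (Sum.inr i)

/-- `E = E(x₁,…,xₙ)` : all variables occurring in `E` are among `x₁,…,xₙ`. -/
def VarsBdd {N : Type*} (n : ℕ) (E : Tm N) : Prop :=
  ∀ γ i, E γ = some (Sum.inr i) → 1 ≤ i ∧ i ≤ n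

/-- The term consisting of the single variable `xᵢ`. -/
def varTm (N : Type*) (i : ℕ) : Tm N := fun γ => if γ = [] then some (Sum.inr i) else none

open Classical in
/-- Substitution `E σ`: each occurrence of the variable `xᵢ` is replaced by `σ i`.
(For a well-formed `E`, the decomposition of a position through a variable
occurrence is unique, so the choice is canonical.) -/
noncomputable def subst {N : Type*} (E : Tm N) (σ : ℕ → Tm N) : Tm N := fun γ =>
  if h : ∃ p : List ℕ × ℕ × List ℕ, γ = p.1 ++ p.2.2 ∧ E p.1 = some (Sum.inr p.2.1)
  then σ h.choose.2.1 h.choose.2.2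
  else E γ

/-- The term `X G₁ G₂ …` with root `X` and `i`-th child `Gs i`. -/
def node {N : Type*} (X : N) (Gs : ℕ → Tm N) : Tm N := fun γ =>
  match γ with
  | [] => some (Sum.inl X)
  | i :: δ => Gs i δ

/-- A first-order grammar: ranked nonterminals and a finite set of root-rewriting
rules `X x₁ … xₘ →ᵃ E` where `E` is a finite term with variables among `x₁,…,xₘ`,
`m = arity X`. -/
structure FOG (N A : Type*) where
  arity : N → ℕ
  rules : Set (N × A × Tm N)
  rules_fin : rules.Finite
  rules_wf : ∀ r ∈ rules, TmFinite r.2.2 ∧ TmWF arity r.2.2 ∧ VarsBdd (arity r.1) r.2.2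

/-- A grammar is deterministic: at most one rule for each pair `(X, a)`. -/
def FOG.Det {N A : Type*} (G : FOG N A) : Prop :=
  ∀ X a E E', (X, a, E) ∈ G.rules → (X, a, E') ∈ G.rules → E = E'

/-- The transition relation of the LTS `L_G` generated by the grammar `G` on terms:
each rule `X x₁ … xₘ →ᵃ E` gives `X G₁ … Gₘ →ᵃ E(G₁,…,Gₘ)`. -/
def gstep {N A : Type*} (G : FOG N A) (a : A) (s t : Tm N) : Prop :=
  ∃ X E Gs, (X, a, E) ∈ G.rules ∧ s = node X Gs ∧ t = subst E Gs

/-!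
If `T ∼ₖ F(T)`, then applying the congruence `s ∼ₖ t ⇒ F(s) ∼ₖ F(t)` repeatedly gives
`T ∼ₖ Fⁿ(T)` for every `n`. Since `F ≠ x₁`, no occurrence of `x₁` in `F` is at the root, so
`Fⁿ(T)` and `Fⁿ(W) = W` coincide on all positions of depth `< n`. A word of length `k` only
reads positions of depth `< k` (each rule inspects the root and then moves to a term built
from the root's children), so `Fᵏ(T) ∼ₖ W`, and `T ∼ₖ W` follows.
-/

section Terms

variable {N : Type*} {ar : N → ℕ}

theorem TmWF.isSome_of_isSome_append {E : Tm N} (hE : TmWF ar E) (η : List ℕ) :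
    ∀ γ : List ℕ, (E (γ ++ η)).isSome → (E γ).isSome := by
  induction η using List.reverseRecOn with
  | nil => intro γ h; simpa using h
  | append_singleton η j ih =>
      intro γ h
      rw [← List.append_assoc, hE.2 (γ ++ η) j] at h
      obtain ⟨v, hv, _⟩ := h
      exact ih γ (by rw [hv]; rfl)

theorem TmWF.eq_none_of_var {E : Tm N} (hE : TmWF ar E) {δ : List ℕ} {i : ℕ}
    (hδ : E δ = some (Sum.inr i)) (j : ℕ) (η : List ℕ) : E (δ ++ j :: η) = none := by
  by_contra h
  have h₁ : (E ((δ ++ [j]) ++ η)).isSome := by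
    simpa using Option.ne_none_iff_isSome.mp h
  obtain ⟨v, hv, h₂, h₃⟩ := (hE.2 δ j).mp (hE.isSome_of_isSome_append η _ h₁)
  rw [hδ] at hv
  cases hv
  simp [arityOf] at h₃
  omega

/-- Variable occurrences are leaves, so a position extends at most one of them. -/
theorem TmWF.eq_of_var_of_append_eq {E : Tm N} (hE : TmWF ar E) {δ₁ δ₂ η₁ η₂ : List ℕ}
    {i₁ i₂ : ℕ} (h₁ : E δ₁ = some (Sum.inr i₁)) (h₂ : E δ₂ = some (Sum.inr i₂))
    (h : δ₁ ++ η₁ = δ₂ ++ η₂) : δ₁ = δ₂ := by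
  rcases List.prefix_or_prefix_of_prefix (h ▸ List.prefix_append δ₁ η₁)
      (List.prefix_append δ₂ η₂) with ⟨ρ, rfl⟩ | ⟨ρ, rfl⟩
  · cases ρ with
    | nil => simp
    | cons j ρ => rw [hE.eq_none_of_var h₁ j ρ] at h₂; cases h₂
  · cases ρ with
    | nil => simp
    | cons j ρ => rw [hE.eq_none_of_var h₂ j ρ] at h₁; cases h₁

theorem tmWF_subAt {E : Tm N} (hE : TmWF ar E) {γ : List ℕ} (h : (E γ).isSome) :
    TmWF ar (subAt E γ) :=
  ⟨by simpa [FOGPaper.subAt] using h, fun δ i => by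
    simpa [FOGPaper.subAt, List.append_assoc] using hE.2 (γ ++ δ) i⟩

theorem TmWF.subAt_singleton {E : Tm N} (hE : TmWF ar E) {X : N}
    (hroot : E [] = some (Sum.inl X)) {i : ℕ} (h₁ : 1 ≤ i) (h₂ : i ≤ ar X) :
    TmWF ar (subAt E [i]) :=
  tmWF_subAt hE (by simpa using (hE.2 [] i).mpr ⟨Sum.inl X, hroot, h₁, h₂⟩)

theorem tmWF_varTm (i : ℕ) : TmWF ar (varTm N i) := by
  refine ⟨by simp [varTm], fun γ j => ⟨fun h => by simp [varTm] at h, ?_⟩⟩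
  rintro ⟨v, hv, h₁, h₂⟩
  simp only [varTm] at hv
  split at hv
  · cases hv; simp [arityOf] at h₂; omega
  · cases hv

theorem TmWF.eq_varTm_of_root {E : Tm N} (hE : TmWF ar E) {i : ℕ}
    (h : E [] = some (Sum.inr i)) : E = varTm N i := by
  funext γ
  cases γ with
  | nil => simpa [varTm] using h
  | cons j δ => simpa [varTm] using hE.eq_none_of_var h j δ

theorem eq_node_subAt {E : Tm N} {X : N} (h : E [] = some (Sum.inl X)) :
    E = node X (fun i => subAt E [i]) := by
  funext γ
  cases γ with
  | nil => simpa [node] using h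
  | cons i δ => rfl

def ThroughVar (E : Tm N) (γ : List ℕ) : Prop :=
  ∃ δ i η, γ = δ ++ η ∧ E δ = some (Sum.inr i)

theorem subst_append_of_var {E : Tm N} (hE : TmWF ar E) {δ : List ℕ} {i : ℕ}
    (hδ : E δ = some (Sum.inr i)) (σ : ℕ → Tm N) (η : List ℕ) :
    subst E σ (δ ++ η) = σ i η := by
  have hex : ∃ p : List ℕ × ℕ × List ℕ, δ ++ η = p.1 ++ p.2.2 ∧ E p.1 = some (Sum.inr p.2.1) :=
    ⟨(δ, i, η), rfl, hδ⟩
  rw [subst, dif_pos hex]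
  obtain ⟨h₁, h₂⟩ := hex.choose_spec
  have hδ' : hex.choose.1 = δ := hE.eq_of_var_of_append_eq h₂ hδ h₁.symm
  rw [hδ'] at h₁ h₂
  rw [hδ] at h₂
  rw [← Sum.inr.inj (Option.some.inj h₂), ← List.append_cancel_left h₁]

theorem subst_of_not_throughVar {E : Tm N} (σ : ℕ → Tm N) {γ : List ℕ}
    (h : ¬ ThroughVar E γ) : subst E σ γ = E γ := by
  rw [subst, dif_neg]
  rintro ⟨⟨δ, i, η⟩, h₁, h₂⟩
  exact h ⟨δ, i, η, h₁, h₂⟩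

theorem subst_varTm (i : ℕ) (σ : ℕ → Tm N) : subst (varTm N i) σ = σ i := by
  funext γ
  simpa using subst_append_of_var (ar := fun _ => 0) (tmWF_varTm i)
    (show varTm N i [] = some (Sum.inr i) by simp [varTm]) σ γ

theorem subst_nil_of_root {E : Tm N} {X : N} (h : E [] = some (Sum.inl X)) (σ : ℕ → Tm N) :
    subst E σ [] = some (Sum.inl X) := by
  rw [subst_of_not_throughVar σ, h]
  rintro ⟨δ, i, η, h₁, h₂⟩
  rw [(List.append_eq_nil_iff.mp h₁.symm).1, h] at h₂
  cases h₂

theorem exists_var_of_subst_eq_var {E : Tm N} (hE : TmWF ar E) {τ : ℕ → Tm N} {ρ : List ℕ}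
    {j : ℕ} (h : subst E τ ρ = some (Sum.inr j)) :
    ∃ δ i η, ρ = δ ++ η ∧ E δ = some (Sum.inr i) ∧ τ i η = some (Sum.inr j) := by
  by_cases ht : ThroughVar E ρ
  · obtain ⟨δ, i, η, rfl, hδ⟩ := ht
    rw [subst_append_of_var hE hδ] at h
    exact ⟨δ, i, η, rfl, hδ, h⟩
  · rw [subst_of_not_throughVar τ ht] at h
    exact absurd ⟨ρ, j, [], (List.append_nil ρ).symm, h⟩ ht

theorem eq_or_prefix_of_append_eq_concat {δ γ η : List ℕ} {j : ℕ} (h : δ ++ η = γ ++ [j]) :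
    δ = γ ++ [j] ∨ δ <+: γ := by
  cases η with
  | nil => left; simpa using h
  | cons e η =>
      right
      have hlen : δ.length ≤ γ.length := by
        have := congrArg List.length h
        simp at this
        omega
      exact List.prefix_of_prefix_length_le ⟨e :: η, h⟩ (List.prefix_append _ _) hlen

theorem tmWF_subst {E : Tm N} (hE : TmWF ar E) {σ : ℕ → Tm N}
    (hσ : ∀ i, (∃ δ, E δ = some (Sum.inr i)) → TmWF ar (σ i)) :
    TmWF ar (subst E σ) := by
  constructor
  · obtain ⟨v, hv⟩ := Option.isSome_iff_exists.mp hE.1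
    cases v with
    | inl X => rw [subst_nil_of_root hv]; rfl
    | inr i => rw [hE.eq_varTm_of_root hv, subst_varTm]; exact (hσ i ⟨[], hv⟩).1
  · intro γ j
    by_cases ht : ThroughVar E γ
    · obtain ⟨δ, i, η, rfl, hδ⟩ := ht
      rw [List.append_assoc, subst_append_of_var hE hδ, subst_append_of_var hE hδ]
      exact (hσ i ⟨δ, hδ⟩).2 η j
    rw [subst_of_not_throughVar σ ht]
    by_cases hvar : ∃ i, E (γ ++ [j]) = some (Sum.inr i)
    · obtain ⟨i, hi⟩ := hvar
      rw [show subst E σ (γ ++ [j]) = σ i [] by simpa using subst_append_of_var hE hi σ []]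
      exact ⟨fun _ => (hE.2 γ j).mp (by rw [hi]; rfl), fun _ => (hσ i ⟨_, hi⟩).1⟩
    · have hnt : ¬ ThroughVar E (γ ++ [j]) := by
        rintro ⟨δ, i, η, heq, hδ⟩
        rcases eq_or_prefix_of_append_eq_concat heq.symm with h | ⟨ρ, rfl⟩
        · exact hvar ⟨i, h ▸ hδ⟩
        · exact ht ⟨δ, i, ρ, rfl, hδ⟩
      rw [subst_of_not_throughVar σ hnt]
      exact hE.2 γ j

theorem subst_subst {E : Tm N} (hE : TmWF ar E) {τ : ℕ → Tm N}
    (hτ : ∀ i, (∃ δ, E δ = some (Sum.inr i)) → TmWF ar (τ i)) (σ : ℕ → Tm N) :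
    subst (subst E τ) σ = subst E (fun i => subst (τ i) σ) := by
  have hEτ : TmWF ar (subst E τ) := tmWF_subst hE hτ
  funext γ
  by_cases h₁ : ThroughVar E γ
  · obtain ⟨δ, i, η, rfl, hδ⟩ := h₁
    have hτi := hτ i ⟨δ, hδ⟩
    rw [subst_append_of_var hE hδ (fun i => subst (τ i) σ) η]
    by_cases h₂ : ThroughVar (τ i) η
    · obtain ⟨δ₂, j, η₂, rfl, hδ₂⟩ := h₂
      have hmid : subst E τ (δ ++ δ₂) = some (Sum.inr j) := by
        rw [subst_append_of_var hE hδ τ δ₂]; exact hδ₂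
      rw [subst_append_of_var hτi hδ₂ σ η₂, ← List.append_assoc,
        subst_append_of_var hEτ hmid σ η₂]
    · have hnt : ¬ ThroughVar (subst E τ) (δ ++ η) := by
        rintro ⟨ρ, j, ζ, heq, hρ⟩
        obtain ⟨δ', i', η', rfl, hδ', hτ'⟩ := exists_var_of_subst_eq_var hE hρ
        rw [List.append_assoc] at heq
        obtain rfl : δ' = δ := hE.eq_of_var_of_append_eq hδ' hδ heq.symm
        rw [hδ] at hδ'
        cases Option.some.inj hδ'
        exact h₂ ⟨η', j, ζ, List.append_cancel_left heq, hτ'⟩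
      rw [subst_of_not_throughVar σ h₂, subst_of_not_throughVar σ hnt,
        subst_append_of_var hE hδ τ η]
  · have hnt : ¬ ThroughVar (subst E τ) γ := by
      rintro ⟨ρ, j, ζ, heq, hρ⟩
      obtain ⟨δ', i', η', rfl, hδ', _⟩ := exists_var_of_subst_eq_var hE hρ
      exact h₁ ⟨δ', i', η' ++ ζ, by rw [heq, List.append_assoc], hδ'⟩
    rw [subst_of_not_throughVar σ hnt, subst_of_not_throughVar τ h₁,
      subst_of_not_throughVar (fun i => subst (τ i) σ) h₁]

theorem subst_cons_of_root {E : Tm N} (hE : TmWF ar E) {X : N}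
    (hroot : E [] = some (Sum.inl X)) (σ : ℕ → Tm N) (i : ℕ) (δ : List ℕ) :
    subst E σ (i :: δ) = subst (subAt E [i]) σ δ := by
  by_cases ht : ThroughVar E (i :: δ)
  · obtain ⟨_ | ⟨i', δ₁⟩, j, η, heq, hvar⟩ := ht
    · rw [hroot] at hvar; cases hvar
    obtain ⟨rfl, rfl⟩ := List.cons.inj heq
    have hchild : subAt E [i] δ₁ = some (Sum.inr j) := hvar
    have hwf : TmWF ar (subAt E [i]) :=
      tmWF_subAt hE (hE.isSome_of_isSome_append δ₁ [i] (by rw [List.singleton_append, hvar]; rfl))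
    change subst E σ ((i :: δ₁) ++ η) = subst (subAt E [i]) σ (δ₁ ++ η)
    rw [subst_append_of_var hE hvar σ η,
      subst_append_of_var hwf hchild σ η]
  · have hnt : ¬ ThroughVar (subAt E [i]) δ := by
      rintro ⟨δ₁, j, η, rfl, hv⟩
      exact ht ⟨i :: δ₁, j, η, rfl, hv⟩
    rw [subst_of_not_throughVar σ ht, subst_of_not_throughVar σ hnt]
    rfl

end Terms

section Traces

variable {tr : A → S → S → Prop}

theorem Steps.append {u v : List A} {s m t : S} (hu : Steps tr u s m) (hv : Steps tr v m t) :
    Steps tr (u ++ v) s t := by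
  induction u generalizing s with
  | nil => cases hu; exact hv
  | cons a u ih =>
      obtain ⟨s', hs, hu⟩ := hu
      exact ⟨s', hs, ih hu⟩

theorem mem_traces_cons {a : A} {w : List A} {s : S} :
    a :: w ∈ traces tr s ↔ ∃ s', tr a s s' ∧ w ∈ traces tr s' :=
  ⟨fun ⟨t, s', h₁, h₂⟩ => ⟨s', h₁, t, h₂⟩, fun ⟨s', h₁, t, h₂⟩ => ⟨t, s', h₁, h₂⟩⟩

theorem sim_iff_forall_simK {r s : S} : Sim tr r s ↔ ∀ k, SimK tr k r s := by
  refine ⟨fun h k => by rw [SimK, tracesLe, tracesLe, show traces tr r = traces tr s from h],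
    fun h => Set.ext fun w => ?_⟩
  exact ⟨fun hw => ((h w.length).le ⟨hw, le_rfl⟩).1, fun hw => ((h w.length).ge ⟨hw, le_rfl⟩).1⟩

end Traces

section Grammar

variable {N : Type*} (G : FOG N A)

theorem FOG.wf_of_mem_rules {X : N} {a : A} {E : Tm N} (h : (X, a, E) ∈ G.rules) :
    TmWF G.arity E ∧ VarsBdd (G.arity X) E :=
  (G.rules_wf _ h).2

variable {G}

theorem TmWF.of_gstep {s t : Tm N} {a : A} (hs : TmWF G.arity s) (h : gstep G a s t) :
    TmWF G.arity t := by
  obtain ⟨X, E, Gs, hrule, rfl, rfl⟩ := h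
  obtain ⟨hE, hEvars⟩ := G.wf_of_mem_rules hrule
  refine tmWF_subst hE fun i ⟨δ, hδ⟩ => ?_
  obtain ⟨h₁, h₂⟩ := hEvars δ i hδ
  exact hs.subAt_singleton rfl h₁ h₂

theorem gstep_subst {E E₁ : Tm N} {a : A} (hE : TmWF G.arity E) (h : gstep G a E E₁)
    (σ : ℕ → Tm N) : gstep G a (subst E σ) (subst E₁ σ) := by
  obtain ⟨X, Er, Gs, hrule, rfl, rfl⟩ := h
  obtain ⟨hEr, hErvars⟩ := G.wf_of_mem_rules hrule
  have hGs : ∀ i, (∃ δ, Er δ = some (Sum.inr i)) → TmWF G.arity (Gs i) := by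
    rintro i ⟨δ, hδ⟩
    obtain ⟨h₁, h₂⟩ := hErvars δ i hδ
    exact hE.subAt_singleton rfl h₁ h₂
  refine ⟨X, Er, fun i => subst (Gs i) σ, hrule, ?_, subst_subst hEr hGs σ⟩
  funext γ
  cases γ with
  | nil => exact subst_nil_of_root rfl σ
  | cons i δ => exact subst_cons_of_root hE rfl σ i δ

theorem exists_gstep_of_gstep_subst {E t : Tm N} {X : N} {a : A} (hE : TmWF G.arity E)
    (hroot : E [] = some (Sum.inl X)) {σ : ℕ → Tm N} (h : gstep G a (subst E σ) t) :
    ∃ E₁, gstep G a E E₁ ∧ t = subst E₁ σ := by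
  obtain ⟨Y, Er, Gs, hrule, hnode, rfl⟩ := h
  obtain rfl : Y = X := by
    have h₁ := subst_nil_of_root hroot σ
    rw [hnode] at h₁
    exact Sum.inl.inj (Option.some.inj h₁)
  obtain ⟨hEr, hErvars⟩ := G.wf_of_mem_rules hrule
  have hτ : ∀ i, (∃ δ, Er δ = some (Sum.inr i)) → TmWF G.arity (subAt E [i]) := by
    rintro i ⟨δ, hδ⟩
    obtain ⟨h₁, h₂⟩ := hErvars δ i hδ
    exact hE.subAt_singleton hroot h₁ h₂
  have hGs : Gs = fun i => subst (subAt E [i]) σ := by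
    funext i δ
    rw [← subst_cons_of_root hE hroot σ i δ, hnode]
    rfl
  exact ⟨_, ⟨Y, Er, _, hrule, eq_node_subAt hroot, rfl⟩, by rw [hGs, subst_subst hEr hτ σ]⟩

theorem steps_subst {u : List A} {E E₁ : Tm N} (hE : TmWF G.arity E)
    (h : Steps (gstep G) u E E₁) (σ : ℕ → Tm N) :
    Steps (gstep G) u (subst E σ) (subst E₁ σ) := by
  induction u generalizing E with
  | nil => cases h; rfl
  | cons a u ih =>
      obtain ⟨E', hE', hrest⟩ := h
      exact ⟨_, gstep_subst hE hE' σ, ih (hE.of_gstep hE') hrest⟩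

theorem mem_traces_subst_iff {E : Tm N} (hE : TmWF G.arity E) (σ : ℕ → Tm N) (w : List A) :
    w ∈ traces (gstep G) (subst E σ) ↔
      w ∈ traces (gstep G) E ∨ ∃ u v i, w = u ++ v ∧ Steps (gstep G) u E (varTm N i) ∧
        v ∈ traces (gstep G) (σ i) := by
  constructor
  · induction w generalizing E with
    | nil => exact fun _ => Or.inl ⟨E, rfl⟩
    | cons a w ih =>
        intro hw
        obtain ⟨v, hv⟩ := Option.isSome_iff_exists.mp hE.1
        cases v with
        | inr i =>
            rw [hE.eq_varTm_of_root hv, subst_varTm] at hw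
            exact Or.inr ⟨[], a :: w, i, rfl, (hE.eq_varTm_of_root hv).symm, hw⟩
        | inl X =>
            obtain ⟨t, hstep, hrest⟩ := mem_traces_cons.mp hw
            obtain ⟨E₁, hE₁, rfl⟩ := exists_gstep_of_gstep_subst hE hv hstep
            rcases ih (hE.of_gstep hE₁) hrest with h | ⟨u, v, i, rfl, hu, hv⟩
            · exact Or.inl (mem_traces_cons.mpr ⟨E₁, hE₁, h⟩)
            · exact Or.inr ⟨a :: u, v, i, rfl, ⟨E₁, hE₁, hu⟩, hv⟩
  · rintro (⟨t, ht⟩ | ⟨u, v, i, rfl, hu, t, hv⟩)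
    · exact ⟨_, steps_subst hE ht σ⟩
    · have hu' := steps_subst hE hu σ
      rw [subst_varTm] at hu'
      exact ⟨t, hu'.append hv⟩

theorem tracesLe_subst_subset {E : Tm N} (hE : TmWF G.arity E) {σ σ' : ℕ → Tm N} {k : ℕ}
    (h : ∀ i, tracesLe (gstep G) k (σ i) ⊆ tracesLe (gstep G) k (σ' i)) :
    tracesLe (gstep G) k (subst E σ) ⊆ tracesLe (gstep G) k (subst E σ') := by
  rintro w ⟨hw, hlen⟩
  refine ⟨(mem_traces_subst_iff hE σ' w).mpr ?_, hlen⟩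
  rcases (mem_traces_subst_iff hE σ w).mp hw with hE' | ⟨u, v, i, rfl, hu, hv⟩
  · exact Or.inl hE'
  · have hvlen : v.length ≤ k := by
      rw [List.length_append] at hlen
      omega
    exact Or.inr ⟨u, v, i, rfl, hu, (h i ⟨hv, hvlen⟩).1⟩

theorem simK_subst {E : Tm N} (hE : TmWF G.arity E) {σ σ' : ℕ → Tm N} {k : ℕ}
    (h : ∀ i, SimK (gstep G) k (σ i) (σ' i)) :
    SimK (gstep G) k (subst E σ) (subst E σ') :=
  (tracesLe_subst_subset hE fun i => (h i).le).antisymm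
    (tracesLe_subst_subset hE fun i => (h i).ge)

def AgreeBelow (n : ℕ) (s t : Tm N) : Prop :=
  ∀ γ : List ℕ, γ.length < n → s γ = t γ

theorem mem_traces_of_agreeBelow {w : List A} {s t : Tm N}
    (hst : AgreeBelow w.length s t) (hw : w ∈ traces (gstep G) s) :
    w ∈ traces (gstep G) t := by
  induction w generalizing s t with
  | nil => exact ⟨t, rfl⟩
  | cons a w ih =>
      obtain ⟨_, ⟨X, Er, Gs, hrule, rfl, rfl⟩, hrest⟩ := mem_traces_cons.mp hw
      have hroot : t [] = some (Sum.inl X) := (hst [] (by simp)).symm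
      have hErwf := (G.wf_of_mem_rules hrule).1
      refine mem_traces_cons.mpr ⟨_, ⟨X, Er, _, hrule, eq_node_subAt hroot, rfl⟩, ih ?_ hrest⟩
      intro γ hγ
      by_cases ht : ThroughVar Er γ
      · obtain ⟨δ, i, η, rfl, hδ⟩ := ht
        rw [subst_append_of_var hErwf hδ, subst_append_of_var hErwf hδ]
        refine hst (i :: η) ?_
        simp only [List.length_cons, List.length_append] at hγ ⊢
        omega
      · rw [subst_of_not_throughVar _ ht, subst_of_not_throughVar _ ht]

theorem simK_of_agreeBelow {s t : Tm N} {k : ℕ} (h : AgreeBelow k s t) :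
    SimK (gstep G) k s t := by
  have mono : ∀ {r r'} {w : List A}, AgreeBelow k r r' → w.length ≤ k →
      w ∈ traces (gstep G) r → w ∈ traces (gstep G) r' :=
    fun hrr' hw => mem_traces_of_agreeBelow fun γ hγ => hrr' γ (hγ.trans_le hw)
  exact Set.ext fun w => ⟨fun ⟨hw, hl⟩ => ⟨mono h hl hw, hl⟩,
    fun ⟨hw, hl⟩ => ⟨mono (fun γ hγ => (h γ hγ).symm) hl hw, hl⟩⟩

end Grammar

section Iteration

variable {N : Type*} {G : FOG N A} {F : Tm N}

/-- The paper's `F(s)`. -/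
noncomputable def substOne (F s : Tm N) : Tm N :=
  subst F (fun j => if j = 1 then s else varTm N j)

theorem simK_substOne (hF : TmWF G.arity F) {s t : Tm N} {k : ℕ}
    (h : SimK (gstep G) k s t) : SimK (gstep G) k (substOne F s) (substOne F t) :=
  simK_subst hF fun i => by split_ifs <;> trivial

theorem simK_iterate_substOne (hF : TmWF G.arity F) {T : Tm N} {k : ℕ}
    (h : SimK (gstep G) k T (substOne F T)) (n : ℕ) :
    SimK (gstep G) k T ((substOne F)^[n] T) := by
  induction n with
  | zero => rfl
  | succ n ih =>
      rw [Function.iterate_succ_apply']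
      exact h.trans (simK_substOne hF ih)

theorem agreeBelow_substOne {ar : N → ℕ} (hF : TmWF ar F) (hFne : F ≠ varTm N 1)
    {s t : Tm N} {m : ℕ} (h : AgreeBelow m s t) :
    AgreeBelow (m + 1) (substOne F s) (substOne F t) := by
  intro γ hγ
  by_cases ht : ThroughVar F γ
  · obtain ⟨δ, i, η, rfl, hδ⟩ := ht
    rw [substOne, substOne, subst_append_of_var hF hδ, subst_append_of_var hF hδ]
    by_cases hi : i = 1
    · subst hi
      have hδne : δ ≠ [] := by rintro rfl; exact hFne (hF.eq_varTm_of_root hδ)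
      have := List.length_pos_of_ne_nil hδne
      simp only [if_true]
      exact h η (by rw [List.length_append] at hγ; omega)
    · simp only [hi, if_false]
  · rw [substOne, substOne, subst_of_not_throughVar _ ht, subst_of_not_throughVar _ ht]

theorem agreeBelow_iterate_substOne {ar : N → ℕ} (hF : TmWF ar F) (hFne : F ≠ varTm N 1)
    (n : ℕ) (s t : Tm N) : AgreeBelow n ((substOne F)^[n] s) ((substOne F)^[n] t) := by
  induction n with
  | zero => intro γ hγ; simp at hγ
  | succ n ih =>
      rw [Function.iterate_succ_apply', Function.iterate_succ_apply']
      exact agreeBelow_substOne hF hFne ih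

theorem simK_of_simK_substOne (hF : TmWF G.arity F) (hFne : F ≠ varTm N 1) {W : Tm N}
    (hW : W = substOne F W) {T : Tm N} {k : ℕ} (h : SimK (gstep G) k T (substOne F T)) :
    SimK (gstep G) k T W := by
  have hWfix : (substOne F)^[k] W = W := Function.iterate_fixed hW.symm k
  have hagree := simK_of_agreeBelow (G := G) (agreeBelow_iterate_substOne hF hFne k T W)
  rw [hWfix] at hagree
  exact (simK_iterate_substOne hF h k).trans hagree

end Iteration

theorem simK_limit_of_simK_subst_general {N A : Type*} (G : FOG N A)
    (F : Tm N) (hFwf : TmWF G.arity F)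
    (hFne : F ≠ varTm N 1)
    (W : Tm N)
    (hWeq : W = subst F (fun j => if j = 1 then W else varTm N j))
    (T : Tm N) (k : ℕ) :
    (SimK (gstep G) k T (subst F (fun j => if j = 1 then T else varTm N j)) →
      SimK (gstep G) k T W) ∧
    (Sim (gstep G) T (subst F (fun j => if j = 1 then T else varTm N j)) →
      Sim (gstep G) T W) :=
  ⟨simK_of_simK_substOne hFwf hFne hWeq, fun h => sim_iff_forall_simK.mpr fun m =>
    simK_of_simK_substOne hFwf hFne hWeq (sim_iff_forall_simK.mp h m)⟩

/-- for `F = F(x₁) ≠ x₁` and a regular term `W` with `W = F(W)`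
(the limit `F[F/x₁]^ω`): `T ∼ₖ F(T)` implies `T ∼ₖ W`, and `T ∼ F(T)` implies `T ∼ W`. -/
theorem simK_limit_of_simK_subst {N A : Type*} [Fintype N] [Fintype A] (G : FOG N A)
    (F : Tm N) (hFreg : TmRegular F) (hFwf : TmWF G.arity F) (hFvars : VarsBdd 1 F)
    (hFne : F ≠ varTm N 1)
    (W : Tm N) (hWreg : TmRegular W) (hWwf : TmWF G.arity W)
    (hWeq : W = subst F (fun j => if j = 1 then W else varTm N j))
    (T : Tm N) (hT : TmGround T ∧ TmRegular T ∧ TmWF G.arity T) (k : ℕ) :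
    (SimK (gstep G) k T (subst F (fun j => if j = 1 then T else varTm N j)) →
      SimK (gstep G) k T W) ∧
    (Sim (gstep G) T (subst F (fun j => if j = 1 then T else varTm N j)) →
      Sim (gstep G) T W) :=
  simK_limit_of_simK_subst_general G F hFwf hFne W hWeq T k

end FOGPaper
end

section
/- Let w be a word over an alphabet Σ with a type-(n+1) presentation given by nonempty words v₁, v₂, …, v_{n+1}. Then there exist words u₁, …, uₙ, each beginning with the first symbol of v₁, such that for every r with 1 ≤ r ≤ n and every choice of indices 1 ≤ i₁ < i₂ < ⋯ < i_r ≤ n, the concatenation u_{i₁} u_{i₂} ⋯ u_{i_r} is a suffix of the right quotient w/v₁. -/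
namespace FOGPaper

/-- Words of type `n`: the empty word is of type 0; a word is of type `n+1` if it has
the form `v·u·v` with `v` of type `n` and `u` nonempty. -/
inductive WordType {α : Type*} : ℕ → List α → Prop
  | zero : WordType 0 []
  | succ {n : ℕ} {v u : List α} : WordType n v → u ≠ [] → WordType (n + 1) (v ++ u ++ v)

/-- The word determined by a type-presentation: `w₁ = v₁`, `wᵢ₊₁ = wᵢ·vᵢ₊₁·wᵢ`. -/
def presWord {α : Type*} (v₁ : List α) (vs : List (List α)) : List α :=
  vs.foldl (fun w v => w ++ v ++ w) v₁

/-!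
Write `W_k` for the word presented by `w₀, v₁, …, v_k`, so `W_{k+1} = W_k·v_{k+1}·W_k`, and
every `W_k` ends in `w₀`. Put `u_{k+1} = w₀·v_{k+1}·(W_k/w₀)`, so that `u_{k+1}·w₀ = w₀·v_{k+1}·W_k`.
If `x·w₀` is a suffix of `W_k`, then `x·u_{k+1}·w₀ = (x·w₀)·v_{k+1}·W_k` is a suffix of
`W_{k+1}`; by induction on `k`, `u_{i₁}⋯u_{i_r}·w₀` is a suffix of `W_k` whenever
`i₁ < ⋯ < i_r ≤ k`.
-/

section

variable {α : Type*}

theorem presWord_append_singleton (w₀ : List α) (vs : List (List α)) (x : List α) :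
    presWord w₀ (vs ++ [x]) = presWord w₀ vs ++ x ++ presWord w₀ vs := by
  simp [presWord, List.foldl_append]

theorem presWord_suffix_presWord_append_singleton (w₀ : List α) (vs : List (List α))
    (x : List α) : presWord w₀ vs <:+ presWord w₀ (vs ++ [x]) := by
  rw [presWord_append_singleton]
  exact List.suffix_append _ _

theorem suffix_presWord (w₀ : List α) (vs : List (List α)) : w₀ <:+ presWord w₀ vs := by
  induction vs using List.reverseRecOn with
  | nil => exact List.suffix_rfl
  | append_singleton vs x ih => exact ih.trans (presWord_suffix_presWord_append_singleton w₀ vs x)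

/-- The words `u₁, …, uₙ`; `rdrop` realises the right quotient by `w₀`. -/
def gapWords (w₀ : List α) (vs : List (List α)) : List (List α) :=
  List.ofFn fun i : Fin vs.length => w₀ ++ vs[i] ++ (presWord w₀ (vs.take i)).rdrop w₀.length

theorem gapWords_append_singleton (w₀ : List α) (vs : List (List α)) (x : List α) :
    gapWords w₀ (vs ++ [x]) =
      gapWords w₀ vs ++ [w₀ ++ x ++ (presWord w₀ vs).rdrop w₀.length] := by
  refine List.ext_getElem (by simp [gapWords]) fun i hi _ => ?_
  simp only [gapWords, List.length_ofFn, List.length_append, List.length_singleton] at hi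
  simp only [gapWords, List.getElem_ofFn, List.getElem_append]
  rcases Nat.lt_or_ge i vs.length with h | h
  · simp [h, List.take_append_of_le_length h.le]
  · obtain rfl : i = vs.length := by omega
    simp

theorem gapWords_ofFn {n : ℕ} (w₀ : List α) (f : Fin n → List α) :
    gapWords w₀ (List.ofFn f) =
      List.ofFn fun i => w₀ ++ f i ++ (presWord w₀ ((List.ofFn f).take i)).rdrop w₀.length :=
  List.ext_getElem (by simp [gapWords]) (by simp [gapWords])

theorem flatten_append_suffix_presWord (w₀ : List α) (vs : List (List α)) {s : List (List α)}
    (hs : s.Sublist (gapWords w₀ vs)) : s.flatten ++ w₀ <:+ presWord w₀ vs := by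
  induction vs using List.reverseRecOn generalizing s with
  | nil =>
    obtain rfl : s = [] := by simpa [gapWords] using hs
    exact List.suffix_rfl
  | append_singleton vs x ih =>
    rw [gapWords_append_singleton, List.sublist_append_iff] at hs
    obtain ⟨s, t, rfl, hs, ht⟩ := hs
    rcases List.sublist_singleton.mp ht with rfl | rfl
    · simpa using (ih hs).trans (presWord_suffix_presWord_append_singleton w₀ vs x)
    · obtain ⟨p, hp⟩ := ih hs
      obtain ⟨q, hq⟩ := suffix_presWord w₀ vs
      have hpq : p ++ s.flatten ++ w₀ = q ++ w₀ := by simpa using hp.trans hq.symm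
      refine ⟨p, ?_⟩
      rw [presWord_append_singleton, ← hq, List.rdrop_append_length]
      calc p ++ ((s ++ [w₀ ++ x ++ q]).flatten ++ w₀)
          = (p ++ s.flatten ++ w₀) ++ x ++ (q ++ w₀) := by simp
        _ = q ++ w₀ ++ x ++ (q ++ w₀) := by rw [hpq]

end

theorem _root_.List.IsChain.sublist_finRange {n : ℕ} {l : List (Fin n)}
    (hl : l.IsChain (· < ·)) : l.Sublist (List.finRange n) := by
  have hp := List.isChain_iff_pairwise.mp hl
  exact List.sublist_of_subperm_of_pairwise (hp.nodup.subperm fun x _ => List.mem_finRange x) hp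
    (List.pairwise_lt_finRange n)

/-- for a type-`(n+1)` presentation of `w` given by nonempty words
`v₁,…,vₙ₊₁`, there are words `u₁,…,uₙ`, all beginning with the first symbol of `v₁`,
such that every concatenation `u_{i₁} u_{i₂} ⋯ u_{i_r}` (for `1 ≤ i₁ < ⋯ < i_r ≤ n`,
`1 ≤ r ≤ n`) is a suffix of the right quotient `w/v₁` (equivalently,
`u_{i₁} ⋯ u_{i_r} ++ v₁` is a suffix of `w`). -/
theorem suffixes_from_type_presentation {α : Type*} (n : ℕ)
    (v : Fin (n + 1) → List α) (hv : ∀ i, v i ≠ []) :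
    ∃ u : Fin n → List α,
      (∀ i, (u i).head? = (v 0).head?) ∧
      ∀ l : List (Fin n), l ≠ [] → l.Chain' (· < ·) →
        ((l.map u).flatten ++ v 0) <:+
          presWord (v 0) (List.ofFn fun i : Fin n => v i.succ) := by
  set vs := List.ofFn fun i : Fin n => v i.succ
  refine ⟨fun i => v 0 ++ v i.succ ++ (presWord (v 0) (vs.take i)).rdrop (v 0).length,
    fun i => ?_, fun l _ hl => ?_⟩
  · simp [List.head?_append_of_ne_nil _ (hv 0)]
  · apply flatten_append_suffix_presWord
    rw [gapWords_ofFn, List.ofFn_eq_map]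
    exact hl.sublist_finRange.map _

end FOGPaper
end
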